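/- Every connected vertex-critical equimatchable graph is 2-connected. -/

import Mathlib

open SimpleGraph

/-- `M` is a maximal matching of `G` (viewed as a subgraph of `G`): it is a matching and it is
not properly contained in any other matching of `G`. -/
def IsMaximalMatching {V : Type*} (G : SimpleGraph V) (M : G.Subgraph) : Prop :=
  M.IsMatching ∧ ∀ M' : G.Subgraph, M'.IsMatching → M ≤ M' → M' = M

/-- `G` is equimatchable if all maximal matchings of `G` have the same cardinality. -/
def Equimatchable {V : Type*} (G : SimpleGraph V) : Prop :=
  ∀ M₁ M₂ : G.Subgraph, IsMaximalMatching G M₁ → IsMaximalMatching G M₂ →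
    M₁.edgeSet.ncard = M₂.edgeSet.ncard

/-- The matching number ν(G): the maximum cardinality of a matching of `G`. -/
noncomputable def matchNum {V : Type*} (G : SimpleGraph V) : ℕ :=
  sSup {n : ℕ | ∃ M : G.Subgraph, M.IsMatching ∧ M.edgeSet.ncard = n}

/-- `G` is vertex-critical equimatchable (VCE): `G` is equimatchable and deleting any vertex
yields a non-equimatchable graph. -/
def VCE {V : Type*} (G : SimpleGraph V) : Prop :=
  Equimatchable G ∧ ∀ v : V, ¬ Equimatchable (G.induce {u | u ≠ v})

/-- `G` is edge-critical equimatchable (ECE): `G` is equimatchable and deleting any edge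
yields a non-equimatchable graph. -/
def ECE {V : Type*} (G : SimpleGraph V) : Prop :=
  Equimatchable G ∧ ∀ u v : V, G.Adj u v → ¬ Equimatchable (G.deleteEdges {s(u, v)})

/-- `G` is factor-critical: deleting any vertex yields a graph with a perfect matching. -/
def FactorCritical {V : Type*} (G : SimpleGraph V) : Prop :=
  ∀ v : V, ∃ M : (G.induce {u | u ≠ v}).Subgraph, M.IsPerfectMatching

/-- `G` is 2-connected: at least 3 vertices, connected, and deleting any vertex leaves a
connected graph. -/
def TwoConnected {V : Type*} [Fintype V] (G : SimpleGraph V) : Prop :=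
  3 ≤ Fintype.card V ∧ G.Connected ∧ ∀ v : V, (G.induce {u | u ≠ v}).Connected

/-- `G` is bipartite: its vertex set can be partitioned into two parts such that every edge
joins the two parts. -/
def IsBipartiteGraph {V : Type*} (G : SimpleGraph V) : Prop :=
  ∃ s : Set V, ∀ u w : V, G.Adj u w → (u ∈ s ↔ w ∉ s)

/-- `G` is randomly matchable: every matching of `G` extends to a perfect matching. -/
def RandomlyMatchable {V : Type*} (G : SimpleGraph V) : Prop :=
  ∀ M : G.Subgraph, M.IsMatching → ∃ P : G.Subgraph, M ≤ P ∧ P.IsPerfectMatching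

/-! If `G - v` splits into nonempty parts `A` and `B` with no edge between them, connectivity gives
neighbours `x ∈ A` and `y ∈ B` of `v`. Fix a maximal matching `T` of `G[B - y]`: for every maximal
matching `M` of `G[A]`, `M ∪ T ∪ {vy}` is a maximal matching of `G`, so equimatchability of `G`
forces all maximal matchings of `G[A]` to have the same size, and symmetrically for `G[B]`. The
maximal matchings of `G - v` are the unions of those of `G[A]` and `G[B]`, so `G - v` is
equimatchable, against vertex-criticality. With at most two vertices, `G - v` has at most one
vertex and is trivially equimatchable. -/
namespace SimpleGraph

variable {V : Type*} {G : SimpleGraph V}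

/-- The matchings of `G` inside `X` that no edge of `G[X]` extends, i.e. the images in `G` of the
maximal matchings of `G.induce X`. -/
def IsMaximalMatchingOn (G : SimpleGraph V) (X : Set V) (M : G.Subgraph) : Prop :=
  M.IsMatching ∧ M.verts ⊆ X ∧ ∀ ⦃x y⦄, x ∈ X → y ∈ X → G.Adj x y → x ∈ M.verts ∨ y ∈ M.verts

namespace Subgraph

lemma IsMatching.sup_of_disjoint_verts {M M' : G.Subgraph} (hM : M.IsMatching)
    (hM' : M'.IsMatching) (hd : Disjoint M.verts M'.verts) : (M ⊔ M').IsMatching :=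
  hM.sup hM' (by rwa [hM.support_eq_verts, hM'.support_eq_verts])

lemma ncard_edgeSet_sup_of_disjoint_verts [Finite V] {M M' : G.Subgraph}
    (hd : Disjoint M.verts M'.verts) :
    (M ⊔ M').edgeSet.ncard = M.edgeSet.ncard + M'.edgeSet.ncard := by
  rw [edgeSet_sup]
  refine Set.ncard_union_eq (Set.disjoint_left.mpr fun e he he' => ?_)
  induction e using Sym2.ind with
  | _ x y => exact Set.disjoint_left.mp hd (M.edge_vert he) (M'.edge_vert he')

lemma IsMatching.induce_inter {M : G.Subgraph} (hM : M.IsMatching) {X : Set V}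
    (hX : ∀ ⦃x y⦄, M.Adj x y → x ∈ X → y ∈ X) : (M.induce (M.verts ∩ X)).IsMatching := by
  rintro x ⟨hxM, hxX⟩
  obtain ⟨y, hxy, huniq⟩ := hM hxM
  exact ⟨y, ⟨⟨hxM, hxX⟩, ⟨M.edge_vert hxy.symm, hX hxy hxX⟩, hxy⟩, fun z hz => huniq z hz.2.2⟩

lemma IsMatching.sup_subgraphOfAdj {M : G.Subgraph} (hM : M.IsMatching) {x y : V}
    (hxy : G.Adj x y) (hx : x ∉ M.verts) (hy : y ∉ M.verts) :
    (M ⊔ G.subgraphOfAdj hxy).IsMatching :=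
  hM.sup_of_disjoint_verts (.subgraphOfAdj hxy) <| by
    simp [Set.disjoint_right, hx, hy]

end Subgraph

namespace IsMaximalMatchingOn

variable {A B : Set V} {M M₁ M₂ : G.Subgraph}

lemma sup (h₁ : G.IsMaximalMatchingOn A M₁) (h₂ : G.IsMaximalMatchingOn B M₂)
    (hAB : Disjoint A B)
    (hcross : ∀ ⦃a b⦄, a ∈ A → b ∈ B → G.Adj a b → a ∈ M₁.verts ∨ b ∈ M₂.verts) :
    G.IsMaximalMatchingOn (A ∪ B) (M₁ ⊔ M₂) := by
  obtain ⟨hM₁, hA, hsat₁⟩ := h₁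
  obtain ⟨hM₂, hB, hsat₂⟩ := h₂
  refine ⟨hM₁.sup_of_disjoint_verts hM₂ (hAB.mono hA hB), Set.union_subset_union hA hB, ?_⟩
  rintro x y (hx | hx) (hy | hy) hxy <;> simp only [Subgraph.verts_sup, Set.mem_union]
  · grind
  · grind
  · grind [G.adj_symm hxy]
  · grind

lemma exists_eq_sup (hM : G.IsMaximalMatchingOn (A ∪ B) M)
    (hsep : ∀ ⦃a b⦄, a ∈ A → b ∈ B → ¬G.Adj a b) :
    ∃ M₁ M₂, G.IsMaximalMatchingOn A M₁ ∧ G.IsMaximalMatchingOn B M₂ ∧ M = M₁ ⊔ M₂ := by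
  obtain ⟨hM, hMAB, hsat⟩ := hM
  have hside : ∀ ⦃x y⦄, M.Adj x y → x ∈ A → y ∈ A := fun x y hxy hx =>
    (hMAB (M.edge_vert hxy.symm)).resolve_right (hsep hx · (M.adj_sub hxy))
  have hside' : ∀ ⦃x y⦄, M.Adj x y → x ∈ B → y ∈ B := fun x y hxy hx =>
    (hMAB (M.edge_vert hxy.symm)).resolve_left (hsep · hx (M.adj_sub hxy.symm))
  have restrict (X : Set V) (hX : ∀ ⦃x y⦄, M.Adj x y → x ∈ X → y ∈ X)
      (hXAB : X ⊆ A ∪ B) : G.IsMaximalMatchingOn X (M.induce (M.verts ∩ X)) :=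
    ⟨hM.induce_inter hX, Set.inter_subset_right, fun x y hx hy hxy => by
      simpa [hx, hy] using hsat (hXAB hx) (hXAB hy) hxy⟩
  refine ⟨_, _, restrict A hside Set.subset_union_left,
    restrict B hside' Set.subset_union_right, ?_⟩
  ext x y
  · rw [Subgraph.verts_sup, Subgraph.induce_verts, Subgraph.induce_verts,
      ← Set.inter_union_distrib_left, Set.inter_eq_left.mpr hMAB]
  · simp only [Subgraph.sup_adj, Subgraph.induce_adj, Set.mem_inter_iff]
    constructor
    · intro hxy
      have hx := M.edge_vert hxy
      have hy := M.edge_vert hxy.symm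
      rcases hMAB hx with hxA | hxB
      · exact Or.inl ⟨⟨hx, hxA⟩, ⟨hy, hside hxy hxA⟩, hxy⟩
      · exact Or.inr ⟨⟨hx, hxB⟩, ⟨hy, hside' hxy hxB⟩, hxy⟩
    · rintro (⟨-, -, hxy⟩ | ⟨-, -, hxy⟩) <;> exact hxy

lemma ncard_edgeSet_sup [Finite V] (h₁ : G.IsMaximalMatchingOn A M₁)
    (h₂ : G.IsMaximalMatchingOn B M₂) (hAB : Disjoint A B) :
    (M₁ ⊔ M₂).edgeSet.ncard = M₁.edgeSet.ncard + M₂.edgeSet.ncard :=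
  Subgraph.ncard_edgeSet_sup_of_disjoint_verts (hAB.mono h₁.2.1 h₂.2.1)

lemma isMaximalMatching (h : G.IsMaximalMatchingOn Set.univ M) : IsMaximalMatching G M := by
  obtain ⟨hM, -, hsat⟩ := h
  refine ⟨hM, fun M' hM' hle => le_antisymm ?_ hle⟩
  have hverts : M'.verts ⊆ M.verts := by
    intro x hx
    obtain ⟨y, hxy, -⟩ := hM' hx
    rcases hsat trivial trivial (M'.adj_sub hxy) with hx | hy
    · exact hx
    · obtain ⟨z, hyz, -⟩ := hM hy
      rw [hM'.eq_of_adj_left hxy.symm (hle.2 hyz)]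
      exact M.edge_vert hyz.symm
  refine ⟨hverts, fun x y hxy => ?_⟩
  obtain ⟨z, hxz, -⟩ := hM (hverts (M'.edge_vert hxy))
  rwa [hM'.eq_of_adj_left hxy (hle.2 hxz)]

end IsMaximalMatchingOn

lemma IsMaximalMatching.mem_verts_or_mem_verts {M : G.Subgraph} (hM : IsMaximalMatching G M)
    {x y : V} (hxy : G.Adj x y) : x ∈ M.verts ∨ y ∈ M.verts := by
  by_contra! hfree
  have hext := hM.2 _ (hM.1.sup_subgraphOfAdj hxy hfree.1 hfree.2) le_sup_left
  exact hfree.1 (hext ▸ by simp)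

lemma IsMaximalMatching.isMaximalMatchingOn_map {s : Set V} {M : (G.induce s).Subgraph}
    (hM : IsMaximalMatching (G.induce s) M) :
    G.IsMaximalMatchingOn s (M.map (Embedding.induce s).toHom) := by
  refine ⟨hM.1.map _ Subtype.val_injective, by rintro _ ⟨x, -, rfl⟩; exact x.2,
    fun x y hx hy hxy => ?_⟩
  simpa [hx, hy] using hM.mem_verts_or_mem_verts (x := ⟨x, hx⟩) (y := ⟨y, hy⟩) hxy

lemma equimatchable_induce_of_ncard_eq {s : Set V}
    (h : ∀ M₁ M₂, G.IsMaximalMatchingOn s M₁ → G.IsMaximalMatchingOn s M₂ →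
      M₁.edgeSet.ncard = M₂.edgeSet.ncard) :
    Equimatchable (G.induce s) := by
  have hncard (M : (G.induce s).Subgraph) :
      (M.map (Embedding.induce s).toHom).edgeSet.ncard = M.edgeSet.ncard := by
    rw [Subgraph.edgeSet_map]
    exact Set.ncard_image_of_injective _ (Sym2.map.injective Subtype.val_injective)
  intro M₁ M₂ h₁ h₂
  rw [← hncard M₁, ← hncard M₂]
  exact h _ _ h₁.isMaximalMatchingOn_map h₂.isMaximalMatchingOn_map

lemma isMaximalMatchingOn_subgraphOfAdj {x y : V} (h : G.Adj x y) :
    G.IsMaximalMatchingOn {x, y} (G.subgraphOfAdj h) :=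
  ⟨Subgraph.IsMatching.subgraphOfAdj h, (G.subgraphOfAdj_verts h).subset,
    fun a _ ha _ _ => Or.inl (by rwa [subgraphOfAdj_verts])⟩

lemma exists_isMaximalMatchingOn [Finite V] (X : Set V) : ∃ M, G.IsMaximalMatchingOn X M := by
  obtain ⟨M, ⟨hM, hMX⟩, hmax⟩ := Set.Finite.exists_maximal
    (Set.toFinite {M : G.Subgraph | M.IsMatching ∧ M.verts ⊆ X}) ⟨⊥, fun _ h => h.elim, by simp⟩
  refine ⟨M, hM, hMX, fun x y hx hy hxy => ?_⟩
  by_contra! hfree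
  have hext := hmax (y := M ⊔ G.subgraphOfAdj hxy)
    ⟨hM.sup_subgraphOfAdj hxy hfree.1 hfree.2, by simp [Set.insert_subset_iff, hMX, hx, hy]⟩
    le_sup_left
  exact hfree.1 (hext.1 (by simp))

section Separation

variable {v : V} {A B : Set V}

lemma Equimatchable.ncard_eq_of_isMaximalMatchingOn [Finite V] (hG : Equimatchable G)
    (hAB : A ∪ B = {u | u ≠ v}) (hdisj : Disjoint A B)
    (hsep : ∀ ⦃a b⦄, a ∈ A → b ∈ B → ¬G.Adj a b) {y : V} (hy : y ∈ B) (hvy : G.Adj v y)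
    {M₁ M₂ : G.Subgraph} (h₁ : G.IsMaximalMatchingOn A M₁) (h₂ : G.IsMaximalMatchingOn A M₂) :
    M₁.edgeSet.ncard = M₂.edgeSet.ncard := by
  obtain ⟨T, hT⟩ := exists_isMaximalMatchingOn (G := G) (B \ {y})
  have hvA : v ∉ A := fun h => (hAB ▸ Set.mem_union_left B h : v ∈ {u | u ≠ v}) rfl
  have hvB : v ∉ B := fun h => (hAB ▸ Set.mem_union_right A h : v ∈ {u | u ≠ v}) rfl
  have hyA : y ∉ A := fun h => Set.disjoint_left.mp hdisj h hy
  have hcover : A ∪ B \ {y} ∪ {v, y} = Set.univ := by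
    refine Set.eq_univ_of_forall fun u => ?_
    rcases eq_or_ne u v with rfl | huv
    · simp
    have hu : u ∈ A ∪ B := hAB ▸ huv
    simp only [Set.mem_union, Set.mem_sdiff, Set.mem_insert_iff, Set.mem_singleton_iff] at hu ⊢
    tauto
  have hextend (M : G.Subgraph) (hM : G.IsMaximalMatchingOn A M) :
      IsMaximalMatching G (M ⊔ T ⊔ G.subgraphOfAdj hvy) ∧
        (M ⊔ T ⊔ G.subgraphOfAdj hvy).edgeSet.ncard = M.edgeSet.ncard + T.edgeSet.ncard + 1 := by
    have hdisj₁ : Disjoint A (B \ {y}) := hdisj.mono_right Set.sdiff_subset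
    have hdisj₂ : Disjoint (A ∪ B \ {y}) {v, y} := by
      simp [Set.disjoint_insert_right, hvA, hvB, hyA]
    have hMT := hM.sup hT hdisj₁ fun a b ha hb hab => (hsep ha hb.1 hab).elim
    have hN := hMT.sup (isMaximalMatchingOn_subgraphOfAdj hvy) hdisj₂
      fun _ _ _ hb _ => Or.inr (by rwa [subgraphOfAdj_verts])
    rw [hcover] at hN
    refine ⟨hN.isMaximalMatching, ?_⟩
    rw [hMT.ncard_edgeSet_sup (isMaximalMatchingOn_subgraphOfAdj hvy) hdisj₂,
      hM.ncard_edgeSet_sup hT hdisj₁, edgeSet_subgraphOfAdj, Set.ncard_singleton]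
  have := hG _ _ (hextend M₁ h₁).1 (hextend M₂ h₂).1
  rw [(hextend M₁ h₁).2, (hextend M₂ h₂).2] at this
  omega

lemma exists_adj_of_separated (hconn : G.Preconnected) (hAB : A ∪ B = {u | u ≠ v})
    (hsep : ∀ ⦃a b⦄, a ∈ A → b ∈ B → ¬G.Adj a b) (hA : A.Nonempty) : ∃ x ∈ A, G.Adj v x := by
  obtain ⟨a, ha⟩ := hA
  have hvA : v ∉ A := fun h => (hAB ▸ Set.mem_union_left B h : v ∈ {u | u ≠ v}) rfl
  obtain ⟨⟨⟨x, u⟩, hxu⟩, -, hx, hu⟩ := (hconn a v).some.exists_boundary_dart A ha hvA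
  have hu' : u = v := by
    by_contra huv
    exact ((hAB ▸ huv : u ∈ A ∪ B).resolve_left hu |> hsep hx) hxu
  exact ⟨x, hx, hu' ▸ hxu.symm⟩

lemma Equimatchable.induce_of_separated [Finite V] (hG : Equimatchable G) (hconn : G.Preconnected)
    (hAB : A ∪ B = {u | u ≠ v}) (hdisj : Disjoint A B)
    (hsep : ∀ ⦃a b⦄, a ∈ A → b ∈ B → ¬G.Adj a b) (hA : A.Nonempty) (hB : B.Nonempty) :
    Equimatchable (G.induce {u | u ≠ v}) := by
  have hBA : B ∪ A = {u | u ≠ v} := Set.union_comm B A ▸ hAB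
  have hsep' : ∀ ⦃b a⦄, b ∈ B → a ∈ A → ¬G.Adj b a := fun _ _ hb ha hba => hsep ha hb hba.symm
  obtain ⟨x, hx, hvx⟩ := exists_adj_of_separated hconn hAB hsep hA
  obtain ⟨y, hy, hvy⟩ := exists_adj_of_separated hconn hBA hsep' hB
  refine equimatchable_induce_of_ncard_eq fun M N hM hN => ?_
  rw [← hAB] at hM hN
  obtain ⟨MA, MB, hMA, hMB, rfl⟩ := hM.exists_eq_sup hsep
  obtain ⟨NA, NB, hNA, hNB, rfl⟩ := hN.exists_eq_sup hsep
  rw [hMA.ncard_edgeSet_sup hMB hdisj, hNA.ncard_edgeSet_sup hNB hdisj,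
    hG.ncard_eq_of_isMaximalMatchingOn hAB hdisj hsep hy hvy hMA hNA,
    hG.ncard_eq_of_isMaximalMatchingOn hBA hdisj.symm hsep' hx hvx hMB hNB]

end Separation

lemma exists_separation_of_not_preconnected {s : Set V} (h : ¬(G.induce s).Preconnected) :
    ∃ A B, A ∪ B = s ∧ Disjoint A B ∧ (∀ ⦃a b⦄, a ∈ A → b ∈ B → ¬G.Adj a b) ∧
      A.Nonempty ∧ B.Nonempty := by
  simp only [Preconnected, not_forall] at h
  obtain ⟨a, b, hab⟩ := h
  set R := {u : s | (G.induce s).Reachable a u}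
  refine ⟨Subtype.val '' R, Subtype.val '' Rᶜ, ?_, ?_, ?_, ⟨a, a, .refl a, rfl⟩, ⟨b, b, hab, rfl⟩⟩
  · rw [← Set.image_union, Set.union_compl_self, Set.image_univ, Subtype.range_coe]
  · exact (Set.disjoint_image_iff Subtype.val_injective).mpr disjoint_compl_right
  · rintro _ _ ⟨a', ha', rfl⟩ ⟨b', hb', rfl⟩ hadj
    exact hb' (ha'.trans (Adj.reachable (G := G.induce s) hadj))

lemma equimatchable_of_subsingleton {W : Type*} [Subsingleton W] (H : SimpleGraph W) :
    Equimatchable H := by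
  have hempty (M : H.Subgraph) : M.edgeSet = ∅ :=
    Set.eq_empty_of_forall_notMem fun e he => by
      induction e using Sym2.ind with
      | _ x y => exact (M.adj_sub he).ne (Subsingleton.elim x y)
  intro M₁ M₂ _ _
  rw [hempty M₁, hempty M₂]

end SimpleGraph

/-- Every connected vertex-critical equimatchable graph is 2-connected. -/
theorem vce_twoConnected {V : Type*} [Fintype V] (G : SimpleGraph V)
    (hconn : G.Connected) (hvce : VCE G) : TwoConnected G := by
  obtain ⟨hG, hcrit⟩ := hvce
  have hnontriv (v : V) : Nontrivial {u | u ≠ v} :=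
    not_subsingleton_iff_nontrivial.mp fun _ => hcrit v (equimatchable_of_subsingleton _)
  refine ⟨?_, hconn, fun v => ?_⟩
  · obtain ⟨v⟩ := hconn.nonempty
    obtain ⟨⟨x, hx⟩, ⟨y, hy⟩, hxy⟩ := exists_pair_ne {u | u ≠ v}
    exact Fintype.two_lt_card_iff.mpr ⟨x, y, v, by simpa using hxy, hx, hy⟩
  · rw [connected_iff]
    refine ⟨by_contra fun hdisc => ?_, inferInstance⟩
    obtain ⟨A, B, hAB, hdisj, hsep, hA, hB⟩ := exists_separation_of_not_preconnected hdisc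
    exact hcrit v (hG.induce_of_separated hconn.preconnected hAB hdisj hsep hA hB)
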